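/- Let ℓ ∈ ℤ and j₂, j₃ ∈ ℂ with 1/2 + j₂ + j₃ = ℓ. Define on D = {(w₁, w₂, w₃) ∈ ℝ³ : w₁ > w₂ > w₃} the function F(w₁, w₂, w₃) := (w₁−w₂)^{(j₃ − ℓ/2)(ℓ−1)} · (w₁−w₃)^{−j₂ − (j₃ − (ℓ+1)/2)ℓ} · (w₂−w₃)^{−1/2 − (j₃ − (ℓ+1)/2)ℓ}. Then at every point of D: ∂₁²F + (j₂/(w₁−w₂) + (j₃−ℓ)/(w₁−w₃))·∂₁F − (1/2)·(∂₂F/(w₁−w₂) + ∂₃F/(w₁−w₃)) − ((j₃ℓ − ℓ(ℓ+1)/2)/(2(w₁−w₃)²))·F = (ℓ−1)(ℓ−2)(j₂ − ℓ/2)(j₂ − (ℓ−1)/2) · (w₁−w₂)^{−j₂(ℓ−1) + (ℓ²−2ℓ−3)/2} · (w₁−w₃)^{j₂(ℓ−1) − (ℓ²−2ℓ+4)/2} · (w₂−w₃)^{j₂ℓ − (ℓ²−2ℓ−3)/2}. -/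

import Mathlib

/-- The partial derivative in the `i`-th direction of a function of three
real variables. -/
noncomputable def pderiv3 (F : (Fin 3 → ℝ) → ℂ) (i : Fin 3) (w : Fin 3 → ℝ) : ℂ :=
  fderiv ℝ F w (Pi.single i 1)

/-- The Ward-identity form of the 3-point function
`⟨φ_{1/2}(w₁) φ_{j₂}(w₂) φ_{j₃}^ℓ(w₃)⟩` of bosonic ghost primaries. -/
noncomputable def ghost3pt (ℓ : ℤ) (j₂ j₃ : ℂ) (w : Fin 3 → ℝ) : ℂ :=
  ((w 0 - w 1 : ℝ) : ℂ) ^ ((j₃ - (ℓ : ℂ) / 2) * ((ℓ : ℂ) - 1))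
    * ((w 0 - w 2 : ℝ) : ℂ) ^ (-j₂ - (j₃ - ((ℓ : ℂ) + 1) / 2) * (ℓ : ℂ))
    * ((w 1 - w 2 : ℝ) : ℂ) ^ (-(1 / 2 : ℂ) - (j₃ - ((ℓ : ℂ) + 1) / 2) * (ℓ : ℂ))

/-!
On `w₂ < w₁ < w₀` the function is a product `U^a V^b T^c` of complex powers of the positive
differences `U = w₀ - w₁`, `V = w₀ - w₂`, `T = w₁ - w₂`. For such a product, the left-hand side of
the BPZ equation is the product itself times `α / U² + β / (U V) + γ / V²`, with `α, β, γ`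
polynomial in the exponents and coefficients. Once `j₃ = ℓ - 1/2 - j₂`, the ghost exponents give
`α = γ = K` and `β = -2K`, with `K = (ℓ-1)(ℓ-2)(j₂-ℓ/2)(j₂-(ℓ-1)/2)`. Since `V - U = T`, the form is
`K T² / (U² V²)`, which shifts the exponents by `(-2, -2, 2)`.
-/

open Filter Topology

noncomputable def powerProduct (a b c : ℂ) (w : Fin 3 → ℝ) : ℂ :=
  ((w 0 - w 1 : ℝ) : ℂ) ^ a * ((w 0 - w 2 : ℝ) : ℂ) ^ b * ((w 1 - w 2 : ℝ) : ℂ) ^ c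

lemma ghost3pt_eq_powerProduct (ℓ : ℤ) (j₂ j₃ : ℂ) :
    ghost3pt ℓ j₂ j₃ = powerProduct ((j₃ - (ℓ : ℂ) / 2) * ((ℓ : ℂ) - 1))
      (-j₂ - (j₃ - ((ℓ : ℂ) + 1) / 2) * (ℓ : ℂ))
      (-(1 / 2 : ℂ) - (j₃ - ((ℓ : ℂ) + 1) / 2) * (ℓ : ℂ)) :=
  rfl

section pderiv3

variable {F G : (Fin 3 → ℝ) → ℂ} {i : Fin 3} {w : Fin 3 → ℝ}

lemma pderiv3_congr_of_eventuallyEq (h : F =ᶠ[𝓝 w] G) : pderiv3 F i w = pderiv3 G i w := by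
  rw [pderiv3, pderiv3, h.fderiv_eq]

lemma pderiv3_add (hF : DifferentiableAt ℝ F w) (hG : DifferentiableAt ℝ G w) :
    pderiv3 (fun x => F x + G x) i w = pderiv3 F i w + pderiv3 G i w := by
  rw [pderiv3, pderiv3, pderiv3, fderiv_fun_add hF hG, add_apply]

lemma pderiv3_const_mul (hF : DifferentiableAt ℝ F w) (c : ℂ) :
    pderiv3 (fun x => c * F x) i w = c * pderiv3 F i w := by
  rw [pderiv3, pderiv3, fderiv_const_mul hF, smul_apply, smul_eq_mul]

end pderiv3

lemma hasFDerivAt_ofReal_sub_cpow {ι : Type*} [Fintype ι] (a : ℂ) {i j : ι} {w : ι → ℝ}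
    (h : w j < w i) :
    HasFDerivAt (fun x : ι → ℝ => ((x i - x j : ℝ) : ℂ) ^ a)
      ((a * ((w i - w j : ℝ) : ℂ) ^ (a - 1)) • Complex.ofRealCLM.comp
        ((ContinuousLinearMap.proj i : (ι → ℝ) →L[ℝ] ℝ) - ContinuousLinearMap.proj j)) w := by
  have hslit : ((w i - w j : ℝ) : ℂ) ∈ Complex.slitPlane :=
    Complex.ofReal_mem_slitPlane.2 (sub_pos.2 h)
  exact (Complex.hasStrictDerivAt_cpow_const hslit).hasDerivAt.comp_hasFDerivAt w
    (Complex.ofRealCLM.comp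
      ((ContinuousLinearMap.proj i : (ι → ℝ) →L[ℝ] ℝ) - ContinuousLinearMap.proj j)).hasFDerivAt

section powerProduct

variable (a b c : ℂ) {w : Fin 3 → ℝ}

lemma differentiableAt_powerProduct (h₂₁ : w 2 < w 1) (h₁₀ : w 1 < w 0) :
    DifferentiableAt ℝ (powerProduct a b c) w :=
  (((hasFDerivAt_ofReal_sub_cpow a h₁₀).mul (hasFDerivAt_ofReal_sub_cpow b (h₂₁.trans h₁₀))).mul
    (hasFDerivAt_ofReal_sub_cpow c h₂₁)).differentiableAt

lemma fderiv_powerProduct_apply (h₂₁ : w 2 < w 1) (h₁₀ : w 1 < w 0) (v : Fin 3 → ℝ) :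
    fderiv ℝ (powerProduct a b c) w v
      = a * ((v 0 - v 1 : ℝ) : ℂ) * powerProduct (a - 1) b c w
        + b * ((v 0 - v 2 : ℝ) : ℂ) * powerProduct a (b - 1) c w
        + c * ((v 1 - v 2 : ℝ) : ℂ) * powerProduct a b (c - 1) w := by
  have hP : HasFDerivAt (powerProduct a b c) _ w :=
    ((hasFDerivAt_ofReal_sub_cpow a h₁₀).mul
      (hasFDerivAt_ofReal_sub_cpow b (h₂₁.trans h₁₀))).mul (hasFDerivAt_ofReal_sub_cpow c h₂₁)
  rw [hP.fderiv]
  simp only [ContinuousLinearMap.comp_sub, smul_add, add_apply, smul_apply, sub_apply,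
    ContinuousLinearMap.comp_apply, ContinuousLinearMap.proj_apply, Complex.ofRealCLM_apply,
    smul_eq_mul, Pi.mul_apply, Complex.ofReal_sub, powerProduct]
  ring

lemma pderiv3_powerProduct_zero (h₂₁ : w 2 < w 1) (h₁₀ : w 1 < w 0) :
    pderiv3 (powerProduct a b c) 0 w
      = a * powerProduct (a - 1) b c w + b * powerProduct a (b - 1) c w := by
  simp [pderiv3, fderiv_powerProduct_apply a b c h₂₁ h₁₀]

lemma pderiv3_powerProduct_one (h₂₁ : w 2 < w 1) (h₁₀ : w 1 < w 0) :
    pderiv3 (powerProduct a b c) 1 w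
      = c * powerProduct a b (c - 1) w - a * powerProduct (a - 1) b c w := by
  simp [pderiv3, fderiv_powerProduct_apply a b c h₂₁ h₁₀, sub_eq_neg_add]

lemma pderiv3_powerProduct_two (h₂₁ : w 2 < w 1) (h₁₀ : w 1 < w 0) :
    pderiv3 (powerProduct a b c) 2 w
      = -(b * powerProduct a (b - 1) c w) - c * powerProduct a b (c - 1) w := by
  simp [pderiv3, fderiv_powerProduct_apply a b c h₂₁ h₁₀, sub_eq_add_neg]

lemma pderiv3_pderiv3_powerProduct_zero_zero (h₂₁ : w 2 < w 1) (h₁₀ : w 1 < w 0) :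
    pderiv3 (pderiv3 (powerProduct a b c) 0) 0 w
      = a * ((a - 1) * powerProduct (a - 1 - 1) b c w + b * powerProduct (a - 1) (b - 1) c w)
        + b * (a * powerProduct (a - 1) (b - 1) c w
          + (b - 1) * powerProduct a (b - 1 - 1) c w) := by
  have hopen : IsOpen {x : Fin 3 → ℝ | x 2 < x 1 ∧ x 1 < x 0} :=
    (isOpen_lt (continuous_apply 2) (continuous_apply 1)).inter
      (isOpen_lt (continuous_apply 1) (continuous_apply 0))
  have hfirst : pderiv3 (powerProduct a b c) 0
      =ᶠ[𝓝 w] fun x => a * powerProduct (a - 1) b c x + b * powerProduct a (b - 1) c x :=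
    eventuallyEq_of_mem (hopen.mem_nhds ⟨h₂₁, h₁₀⟩) fun x hx =>
      pderiv3_powerProduct_zero a b c hx.1 hx.2
  rw [pderiv3_congr_of_eventuallyEq hfirst,
    pderiv3_add ((differentiableAt_powerProduct _ _ _ h₂₁ h₁₀).const_mul a)
      ((differentiableAt_powerProduct _ _ _ h₂₁ h₁₀).const_mul b),
    pderiv3_const_mul (differentiableAt_powerProduct _ _ _ h₂₁ h₁₀),
    pderiv3_const_mul (differentiableAt_powerProduct _ _ _ h₂₁ h₁₀),
    pderiv3_powerProduct_zero _ _ _ h₂₁ h₁₀, pderiv3_powerProduct_zero _ _ _ h₂₁ h₁₀]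

lemma powerProduct_sub_one_fst (h₁₀ : w 1 < w 0) :
    powerProduct (a - 1) b c w = powerProduct a b c w / ((w 0 - w 1 : ℝ) : ℂ) := by
  have hU : ((w 0 - w 1 : ℝ) : ℂ) ≠ 0 := Complex.ofReal_ne_zero.2 (sub_pos.2 h₁₀).ne'
  rw [powerProduct, powerProduct, Complex.cpow_sub _ _ hU, Complex.cpow_one]
  ring

lemma powerProduct_sub_one_snd (h₂₀ : w 2 < w 0) :
    powerProduct a (b - 1) c w = powerProduct a b c w / ((w 0 - w 2 : ℝ) : ℂ) := by
  have hV : ((w 0 - w 2 : ℝ) : ℂ) ≠ 0 := Complex.ofReal_ne_zero.2 (sub_pos.2 h₂₀).ne'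
  rw [powerProduct, powerProduct, Complex.cpow_sub _ _ hV, Complex.cpow_one]
  ring

lemma powerProduct_sub_one_thd (h₂₁ : w 2 < w 1) :
    powerProduct a b (c - 1) w = powerProduct a b c w / ((w 1 - w 2 : ℝ) : ℂ) := by
  have hT : ((w 1 - w 2 : ℝ) : ℂ) ≠ 0 := Complex.ofReal_ne_zero.2 (sub_pos.2 h₂₁).ne'
  rw [powerProduct, powerProduct, Complex.cpow_sub _ _ hT, Complex.cpow_one]
  ring

end powerProduct

noncomputable def bpzOperator (p q r : ℂ) (F : (Fin 3 → ℝ) → ℂ) (w : Fin 3 → ℝ) : ℂ :=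
  pderiv3 (pderiv3 F 0) 0 w
    + (p / ((w 0 - w 1 : ℝ) : ℂ) + q / ((w 0 - w 2 : ℝ) : ℂ)) * pderiv3 F 0 w
    - (1 / 2) * (pderiv3 F 1 w / ((w 0 - w 1 : ℝ) : ℂ) + pderiv3 F 2 w / ((w 0 - w 2 : ℝ) : ℂ))
    - (r / (2 * ((w 0 - w 2 : ℝ) : ℂ) ^ 2)) * F w

section bpz

variable (a b c p q r : ℂ) {w : Fin 3 → ℝ}

/-- No `1 / T` survives: the `∂₂`, `∂₃` terms contribute `-(c/2) (1/(TU) - 1/(TV)) = -c / (2UV)`. -/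
lemma bpzOperator_powerProduct (h₂₁ : w 2 < w 1) (h₁₀ : w 1 < w 0) :
    bpzOperator p q r (powerProduct a b c) w
      = (a * (a - 1 / 2 + p) / ((w 0 - w 1 : ℝ) : ℂ) ^ 2
          + (2 * a * b + p * b + q * a - c / 2)
              / (((w 0 - w 1 : ℝ) : ℂ) * ((w 0 - w 2 : ℝ) : ℂ))
          + (b * (b - 1 / 2 + q) - r / 2) / ((w 0 - w 2 : ℝ) : ℂ) ^ 2)
        * powerProduct a b c w := by
  have h₂₀ := h₂₁.trans h₁₀
  rw [bpzOperator, pderiv3_pderiv3_powerProduct_zero_zero a b c h₂₁ h₁₀,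
    pderiv3_powerProduct_zero a b c h₂₁ h₁₀, pderiv3_powerProduct_one a b c h₂₁ h₁₀,
    pderiv3_powerProduct_two a b c h₂₁ h₁₀]
  simp only [powerProduct_sub_one_fst _ _ _ h₁₀, powerProduct_sub_one_snd _ _ _ h₂₀,
    powerProduct_sub_one_thd _ _ _ h₂₁]
  have hU : ((w 0 - w 1 : ℝ) : ℂ) ≠ 0 := Complex.ofReal_ne_zero.2 (sub_pos.2 h₁₀).ne'
  have hV : ((w 0 - w 2 : ℝ) : ℂ) ≠ 0 := Complex.ofReal_ne_zero.2 (sub_pos.2 h₂₀).ne'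
  have hT : ((w 1 - w 2 : ℝ) : ℂ) ≠ 0 := Complex.ofReal_ne_zero.2 (sub_pos.2 h₂₁).ne'
  have hVUT : ((w 0 - w 2 : ℝ) : ℂ) = ((w 0 - w 1 : ℝ) : ℂ) + ((w 1 - w 2 : ℝ) : ℂ) := by
    push_cast; ring
  rw [hVUT] at hV ⊢
  field_simp
  ring

lemma bpzOperator_powerProduct_of_perfect_square (K : ℂ) (hα : a * (a - 1 / 2 + p) = K)
    (hβ : 2 * a * b + p * b + q * a - c / 2 = -2 * K) (hγ : b * (b - 1 / 2 + q) - r / 2 = K)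
    (h₂₁ : w 2 < w 1) (h₁₀ : w 1 < w 0) :
    bpzOperator p q r (powerProduct a b c) w
      = K * ((w 0 - w 1 : ℝ) : ℂ) ^ (a - 2) * ((w 0 - w 2 : ℝ) : ℂ) ^ (b - 2)
          * ((w 1 - w 2 : ℝ) : ℂ) ^ (c + 2) := by
  have h₂₀ := h₂₁.trans h₁₀
  have hU : ((w 0 - w 1 : ℝ) : ℂ) ≠ 0 := Complex.ofReal_ne_zero.2 (sub_pos.2 h₁₀).ne'
  have hV : ((w 0 - w 2 : ℝ) : ℂ) ≠ 0 := Complex.ofReal_ne_zero.2 (sub_pos.2 h₂₀).ne'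
  have hT : ((w 1 - w 2 : ℝ) : ℂ) ≠ 0 := Complex.ofReal_ne_zero.2 (sub_pos.2 h₂₁).ne'
  rw [bpzOperator_powerProduct a b c p q r h₂₁ h₁₀, hα, hβ, hγ, powerProduct,
    Complex.cpow_sub _ _ hU, Complex.cpow_sub _ _ hV, Complex.cpow_add _ _ hT,
    Complex.cpow_two, Complex.cpow_two, Complex.cpow_two]
  have hVUT : ((w 0 - w 2 : ℝ) : ℂ) = ((w 0 - w 1 : ℝ) : ℂ) + ((w 1 - w 2 : ℝ) : ℂ) := by
    push_cast; ring
  rw [hVUT] at hV ⊢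
  field_simp
  ring

end bpz

/-- The BPZ equation, with source term, satisfied by the Ward-identity form
of the 3-point function `⟨φ_{1/2}(w₁) φ_{j₂}(w₂) φ_{j₃}^ℓ(w₃)⟩`. -/
theorem ghost_three_point_bpz (ℓ : ℤ) (j₂ j₃ : ℂ) (hsum : 1 / 2 + j₂ + j₃ = ℓ) :
    ∀ w : Fin 3 → ℝ, w 2 < w 1 → w 1 < w 0 →
      pderiv3 (pderiv3 (ghost3pt ℓ j₂ j₃) 0) 0 w
        + (j₂ / ((w 0 - w 1 : ℝ) : ℂ) + (j₃ - (ℓ : ℂ)) / ((w 0 - w 2 : ℝ) : ℂ))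
            * pderiv3 (ghost3pt ℓ j₂ j₃) 0 w
        - (1 / 2) * (pderiv3 (ghost3pt ℓ j₂ j₃) 1 w / ((w 0 - w 1 : ℝ) : ℂ)
            + pderiv3 (ghost3pt ℓ j₂ j₃) 2 w / ((w 0 - w 2 : ℝ) : ℂ))
        - ((j₃ * (ℓ : ℂ) - (ℓ : ℂ) * ((ℓ : ℂ) + 1) / 2)
            / (2 * ((w 0 - w 2 : ℝ) : ℂ) ^ 2)) * ghost3pt ℓ j₂ j₃ w
      = ((ℓ : ℂ) - 1) * ((ℓ : ℂ) - 2) * (j₂ - (ℓ : ℂ) / 2) * (j₂ - ((ℓ : ℂ) - 1) / 2)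
          * ((w 0 - w 1 : ℝ) : ℂ) ^ (-j₂ * ((ℓ : ℂ) - 1) + ((ℓ : ℂ) ^ 2 - 2 * (ℓ : ℂ) - 3) / 2)
          * ((w 0 - w 2 : ℝ) : ℂ) ^ (j₂ * ((ℓ : ℂ) - 1) - ((ℓ : ℂ) ^ 2 - 2 * (ℓ : ℂ) + 4) / 2)
          * ((w 1 - w 2 : ℝ) : ℂ) ^ (j₂ * (ℓ : ℂ) - ((ℓ : ℂ) ^ 2 - 2 * (ℓ : ℂ) - 3) / 2) := by
  intro w h₂₁ h₁₀
  obtain rfl : j₃ = ℓ - 1 / 2 - j₂ := by linear_combination hsum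
  change bpzOperator _ _ _ (ghost3pt ℓ j₂ _) w = _
  rw [ghost3pt_eq_powerProduct, bpzOperator_powerProduct_of_perfect_square _ _ _ _ _ _
    (((ℓ : ℂ) - 1) * ((ℓ : ℂ) - 2) * (j₂ - (ℓ : ℂ) / 2) * (j₂ - ((ℓ : ℂ) - 1) / 2))
    ?_ ?_ ?_ h₂₁ h₁₀]
  · ring_nf
  all_goals ring
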